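/- arXiv:1012.2254 — 2 statements merged into one kernel-verified Lean document; each statement's English description precedes it below -/
import Mathlib

section
/- Let g be a non-negative, increasing, concave function on [0,∞), and let A, B be PSD n×n Hermitian matrices with A ≥ ‖B‖_∞ · I (so in particular A ≥ B ≥ 0). Then for every k, the k-th largest eigenvalue of g(A−B) is at least the k-th largest eigenvalue of g(A) − g(B). -/
open Matrix
open scoped ComplexOrder

/-- `f` applied to a matrix via the spectral decomposition (junk value `0` if
the matrix is not Hermitian). -/
noncomputable def matFun {n : ℕ} (f : ℝ → ℝ) (A : Matrix (Fin n) (Fin n) ℂ) :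
    Matrix (Fin n) (Fin n) ℂ :=
  if hA : A.IsHermitian then
    (hA.eigenvectorUnitary : Matrix (Fin n) (Fin n) ℂ) *
      Matrix.diagonal (fun i => (f (hA.eigenvalues i) : ℂ)) *
      (star hA.eigenvectorUnitary : Matrix (Fin n) (Fin n) ℂ)
  else 0

/-- The eigenvalues of a Hermitian matrix, sorted in non-increasing order
(junk value `0` if the matrix is not Hermitian). -/
noncomputable def eigsDesc {n : ℕ} (A : Matrix (Fin n) (Fin n) ℂ) : Fin n → ℝ :=
  if hA : A.IsHermitian then (fun k => hA.eigenvalues (Tuple.sort hA.eigenvalues (Fin.rev k)))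
  else 0

/-- The absolute value `|X| = (XᴴX)^{1/2}` of a matrix. -/
noncomputable def matAbs {n : ℕ} (X : Matrix (Fin n) (Fin n) ℂ) : Matrix (Fin n) (Fin n) ℂ :=
  (Matrix.posSemidef_conjTranspose_mul_self X).1.eigenvectorUnitary.1 *
    diagonal ((↑) ∘ (√·) ∘ (Matrix.posSemidef_conjTranspose_mul_self X).1.eigenvalues) *
    (star (Matrix.posSemidef_conjTranspose_mul_self X).1.eigenvectorUnitary : Matrix (Fin n) (Fin n) ℂ)

/-- The singular values of `X`, sorted in non-increasing order. -/
noncomputable def svalsDesc {n : ℕ} (X : Matrix (Fin n) (Fin n) ℂ) : Fin n → ℝ :=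
  eigsDesc (matAbs X)

/-- Sum of the first `k` entries of a vector indexed by `Fin n`. -/
noncomputable def kSum {n : ℕ} (μ : Fin n → ℝ) (k : ℕ) : ℝ :=
  ∑ j ∈ Finset.univ.filter (fun j : Fin n => (j : ℕ) < k), μ j

/-- The operator norm: the largest singular value. -/
noncomputable def opNorm {n : ℕ} (X : Matrix (Fin n) (Fin n) ℂ) : ℝ :=
  ⨆ i, svalsDesc X i

/-! Put `M = A - B`; it is positive semidefinite because `B ≤ ‖B‖ ≤ A`. Let `λ = λ_k(M)` and let
`v` be a unit vector in the span of the eigenvectors of the `n - k` smallest eigenvalues of `M`,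
so that `⟨v, M v⟩ ≤ λ`. Write `q_j` for the weights of `v` on the eigenvectors of `B`, with
eigenvalues `b_j ≤ ‖B‖ ≤ a := ⟨v, A v⟩`. Jensen's inequality for `A` and `B`, together with the
subadditivity `g (x + y) ≤ g x + g y` of a concave `g` with `g 0 ≥ 0`, gives
`⟨v, g(A) v⟩ - ⟨v, g(B) v⟩ ≤ Σ q_j (g a - g b_j) ≤ Σ q_j g (a - b_j) ≤ g ⟨v, M v⟩ ≤ g λ`.
By the min-max principle this yields `λ_k(g(A) - g(B)) ≤ g λ`, and `g λ ≤ λ_k(g(M))` because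
`g` is monotone. -/

variable {n : ℕ}

theorem ConcaveOn.map_add_le {g : ℝ → ℝ} (hg : ConcaveOn ℝ (Set.Ici 0) g) (hg0 : 0 ≤ g 0)
    {x y : ℝ} (hx : 0 ≤ x) (hy : 0 ≤ y) : g (x + y) ≤ g x + g y := by
  rcases (add_nonneg hx hy).eq_or_lt with hxy | hxy
  · obtain ⟨rfl, rfl⟩ : x = 0 ∧ y = 0 := ⟨by linarith, by linarith⟩
    simpa using hg0
  have scale : ∀ t : ℝ, 0 ≤ t → t ≤ 1 → t * g (x + y) ≤ g (t * (x + y)) := fun t ht0 ht1 => by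
    have := hg.2 (Set.mem_Ici.2 le_rfl) (Set.mem_Ici.2 hxy.le) (sub_nonneg.2 ht1) ht0 (by ring)
    simp only [smul_eq_mul, mul_zero, zero_add] at this
    nlinarith [mul_nonneg (sub_nonneg.2 ht1) hg0]
  have hx' := scale (x / (x + y)) (by positivity) ((div_le_one hxy).2 (by linarith))
  have hy' := scale (y / (x + y)) (by positivity) ((div_le_one hxy).2 (by linarith))
  rw [div_mul_cancel₀ _ hxy.ne'] at hx' hy'
  calc g (x + y) = x / (x + y) * g (x + y) + y / (x + y) * g (x + y) := by
        field_simp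
    _ ≤ g x + g y := add_le_add hx' hy'

theorem ConcaveOn.sum_mul_map_sub_sum_mul_map_le {ι κ : Type*} [Fintype ι] [Fintype κ]
    {g : ℝ → ℝ} (hg : ConcaveOn ℝ (Set.Ici 0) g) (hg0 : 0 ≤ g 0)
    {p a : ι → ℝ} {q b : κ → ℝ} (hp0 : ∀ i, 0 ≤ p i) (hp1 : ∑ i, p i = 1)
    (hq0 : ∀ j, 0 ≤ q j) (hq1 : ∑ j, q j = 1) (ha : ∀ i, 0 ≤ a i) (hb : ∀ j, 0 ≤ b j)
    (hba : ∀ j, b j ≤ ∑ i, p i * a i) :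
    ∑ i, p i * g (a i) - ∑ j, q j * g (b j) ≤ g (∑ i, p i * a i - ∑ j, q j * b j) := by
  set x := ∑ i, p i * a i
  have jensen_a : ∑ i, p i * g (a i) ≤ g x := by
    simpa only [smul_eq_mul] using
      hg.le_map_sum (fun i _ => hp0 i) hp1 (fun i _ => Set.mem_Ici.2 (ha i))
  have jensen_b : ∑ j, q j * g (x - b j) ≤ g (∑ j, q j * (x - b j)) := by
    simpa only [smul_eq_mul] using
      hg.le_map_sum (fun j _ => hq0 j) hq1 (fun j _ => Set.mem_Ici.2 (sub_nonneg.2 (hba j)))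
  have subadd : ∀ j, g x - g (b j) ≤ g (x - b j) := fun j => by
    have := hg.map_add_le hg0 (sub_nonneg.2 (hba j)) (hb j)
    rw [sub_add_cancel] at this
    linarith
  calc ∑ i, p i * g (a i) - ∑ j, q j * g (b j)
      ≤ g x - ∑ j, q j * g (b j) := by linarith
    _ = ∑ j, q j * (g x - g (b j)) := by
        simp only [mul_sub, Finset.sum_sub_distrib, ← Finset.sum_mul, hq1, one_mul]
    _ ≤ ∑ j, q j * g (x - b j) :=
        Finset.sum_le_sum fun j _ => mul_le_mul_of_nonneg_left (subadd j) (hq0 j)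
    _ ≤ g (∑ j, q j * (x - b j)) := jensen_b
    _ = g (x - ∑ j, q j * b j) := by
        simp only [mul_sub, Finset.sum_sub_distrib, ← Finset.sum_mul, hq1, one_mul]

noncomputable def sqNorm (v : Fin n → ℂ) : ℝ := ∑ i, Complex.normSq (v i)

theorem star_dotProduct_self_eq_sqNorm (v : Fin n → ℂ) : star v ⬝ᵥ v = (sqNorm v : ℂ) := by
  simp [dotProduct, sqNorm, Complex.normSq_eq_conj_mul_self]

theorem sqNorm_pos {v : Fin n → ℂ} (hv : v ≠ 0) : 0 < sqNorm v := by
  obtain ⟨i, hi⟩ := Function.ne_iff.1 hv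
  exact Finset.sum_pos' (fun j _ => Complex.normSq_nonneg _)
    ⟨i, Finset.mem_univ i, Complex.normSq_pos.2 hi⟩

theorem sqNorm_smul (a : ℂ) (v : Fin n → ℂ) : sqNorm (a • v) = Complex.normSq a * sqNorm v := by
  simp [sqNorm, Finset.mul_sum, Complex.normSq_mul]

theorem exists_sqNorm_eq_one_mem_inf (V W : Submodule ℂ (Fin n → ℂ))
    (h : n < Module.finrank ℂ V + Module.finrank ℂ W) :
    ∃ v, sqNorm v = 1 ∧ v ∈ V ∧ v ∈ W := by
  have hsup : Module.finrank ℂ ↥(V ⊔ W) ≤ n := by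
    simpa using Submodule.finrank_le (V ⊔ W)
  have hinf : 0 < Module.finrank ℂ ↥(V ⊓ W) := by
    have := Submodule.finrank_sup_add_finrank_inf_eq V W
    omega
  obtain ⟨⟨z, hzV, hzW⟩, hz⟩ := Module.finrank_pos_iff_exists_ne_zero.1 hinf
  have hz : 0 < sqNorm z := sqNorm_pos fun h => hz (Subtype.ext h)
  refine ⟨(((√(sqNorm z))⁻¹ : ℝ) : ℂ) • z, ?_, V.smul_mem _ hzV, W.smul_mem _ hzW⟩
  rw [sqNorm_smul, Complex.normSq_ofReal, ← mul_inv, Real.mul_self_sqrt hz.le,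
    inv_mul_cancel₀ hz.ne']

theorem star_dotProduct_mul_diagonal_mul_star_mulVec (U : Matrix (Fin n) (Fin n) ℂ)
    (d : Fin n → ℝ) (v : Fin n → ℂ) :
    star v ⬝ᵥ ((U * diagonal (fun i => (d i : ℂ)) * star U) *ᵥ v)
      = ((∑ i, Complex.normSq ((star U *ᵥ v) i) * d i : ℝ) : ℂ) := by
  have hstar : star v ᵥ* U = star (star U *ᵥ v) := by
    rw [star_mulVec, star_eq_conjTranspose, conjTranspose_conjTranspose]
  rw [← mulVec_mulVec, ← mulVec_mulVec, dotProduct_mulVec, hstar]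
  push_cast
  simp only [dotProduct, mulVec_diagonal, Pi.star_apply, Complex.normSq_eq_conj_mul_self,
    Complex.star_def]
  exact Finset.sum_congr rfl fun i _ => by ring

theorem matFun_id {M : Matrix (Fin n) (Fin n) ℂ} (hM : M.IsHermitian) : matFun id M = M := by
  rw [matFun, dif_pos hM]
  conv_rhs => rw [hM.spectral_theorem]
  rfl

theorem isHermitian_matFun {M : Matrix (Fin n) (Fin n) ℂ} (hM : M.IsHermitian) (f : ℝ → ℝ) :
    (matFun f M).IsHermitian := by
  rw [matFun, dif_pos hM]
  simpa [star_eq_conjTranspose] using isHermitian_mul_mul_conjTranspose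
    (hM.eigenvectorUnitary : Matrix (Fin n) (Fin n) ℂ)
    (isHermitian_diagonal_of_self_adjoint _ (by ext i; simp))

section Spectral

variable {M : Matrix (Fin n) (Fin n) ℂ} (hM : M.IsHermitian)

noncomputable def spectralWeight (v : Fin n → ℂ) (i : Fin n) : ℝ :=
  Complex.normSq ((star (hM.eigenvectorUnitary : Matrix (Fin n) (Fin n) ℂ) *ᵥ v) i)

theorem spectralWeight_nonneg (v : Fin n → ℂ) (i : Fin n) : 0 ≤ spectralWeight hM v i :=
  Complex.normSq_nonneg _

theorem star_dotProduct_matFun_mulVec (f : ℝ → ℝ) (v : Fin n → ℂ) :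
    star v ⬝ᵥ (matFun f M *ᵥ v) =
      ((∑ i, spectralWeight hM v i * f (hM.eigenvalues i) : ℝ) : ℂ) := by
  rw [matFun, dif_pos hM]
  exact star_dotProduct_mul_diagonal_mul_star_mulVec _ _ v

theorem star_dotProduct_mulVec_eq_sum (v : Fin n → ℂ) :
    star v ⬝ᵥ (M *ᵥ v) = ((∑ i, spectralWeight hM v i * hM.eigenvalues i : ℝ) : ℂ) := by
  conv_lhs => rw [← matFun_id hM]
  exact star_dotProduct_matFun_mulVec hM id v

theorem sum_spectralWeight (v : Fin n → ℂ) : ∑ i, spectralWeight hM v i = sqNorm v := by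
  have h := star_dotProduct_mul_diagonal_mul_star_mulVec
    (hM.eigenvectorUnitary : Matrix (Fin n) (Fin n) ℂ) 1 v
  simp only [Pi.one_apply, Complex.ofReal_one, mul_one, diagonal_one,
    (mem_unitaryGroup_iff).1 hM.eigenvectorUnitary.2, one_mulVec,
    star_dotProduct_self_eq_sqNorm] at h
  exact_mod_cast h.symm

noncomputable def eigenspan (S : Finset (Fin n)) : Submodule ℂ (Fin n → ℂ) :=
  (⨅ i ∈ (↑S : Set (Fin n))ᶜ, LinearMap.ker (LinearMap.proj i)).comap
    (UnitaryGroup.toLinearEquiv (star hM.eigenvectorUnitary)).toLinearMap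

theorem mem_eigenspan {S : Finset (Fin n)} {v : Fin n → ℂ} :
    v ∈ eigenspan hM S ↔
      ∀ i ∉ S, (star (hM.eigenvectorUnitary : Matrix (Fin n) (Fin n) ℂ) *ᵥ v) i = 0 := by
  simp [eigenspan, Submodule.mem_iInf, UnitaryGroup.toLinearEquiv]

theorem finrank_eigenspan (S : Finset (Fin n)) : Module.finrank ℂ (eigenspan hM S) = S.card := by
  rw [eigenspan, Submodule.comap_equiv_eq_map_symm, LinearEquiv.finrank_map_eq,
    (LinearMap.iInfKerProjEquiv ℂ (fun _ : Fin n => ℂ) disjoint_compl_right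
      (by simp)).finrank_eq]
  simp

theorem sum_spectralWeight_mul_le_of_mem_eigenspan {S : Finset (Fin n)} {v : Fin n → ℂ}
    (hv : v ∈ eigenspan hM S) {d e : Fin n → ℝ} (hde : ∀ i ∈ S, d i ≤ e i) :
    ∑ i, spectralWeight hM v i * d i ≤ ∑ i, spectralWeight hM v i * e i := by
  refine Finset.sum_le_sum fun i _ => ?_
  by_cases hi : i ∈ S
  · exact mul_le_mul_of_nonneg_left (hde i hi) (spectralWeight_nonneg hM v i)
  · simp [spectralWeight, (mem_eigenspan hM).1 hv i hi]

noncomputable def eigIndexDesc : Equiv.Perm (Fin n) :=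
  Fin.revPerm.trans (Tuple.sort hM.eigenvalues)

theorem eigsDesc_eq (j : Fin n) : eigsDesc M j = hM.eigenvalues (eigIndexDesc hM j) := by
  rw [eigsDesc, dif_pos hM]
  rfl

theorem eigsDesc_antitone (hM : M.IsHermitian) : Antitone (eigsDesc M) := fun i j hij => by
  rw [eigsDesc_eq hM, eigsDesc_eq hM]
  exact Tuple.monotone_sort hM.eigenvalues (Fin.rev_le_rev.2 hij)

noncomputable def upperEigenspan (k : Fin n) : Submodule ℂ (Fin n → ℂ) :=
  eigenspan hM ((Finset.Iic k).map (eigIndexDesc hM).toEmbedding)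

noncomputable def lowerEigenspan (k : Fin n) : Submodule ℂ (Fin n → ℂ) :=
  eigenspan hM ((Finset.Ici k).map (eigIndexDesc hM).toEmbedding)

theorem finrank_upperEigenspan (k : Fin n) : Module.finrank ℂ (upperEigenspan hM k) = k + 1 := by
  rw [upperEigenspan, finrank_eigenspan, Finset.card_map, Fin.card_Iic]

theorem finrank_lowerEigenspan (k : Fin n) : Module.finrank ℂ (lowerEigenspan hM k) = n - k := by
  rw [lowerEigenspan, finrank_eigenspan, Finset.card_map, Fin.card_Ici]

theorem le_sum_spectralWeight_mul_of_mem_upperEigenspan {f : ℝ → ℝ} {s : Set ℝ}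
    (hf : MonotoneOn f s) (hs : ∀ i, hM.eigenvalues i ∈ s) {k : Fin n} {v : Fin n → ℂ}
    (hv : v ∈ upperEigenspan hM k) :
    sqNorm v * f (eigsDesc M k) ≤ ∑ i, spectralWeight hM v i * f (hM.eigenvalues i) := by
  rw [← sum_spectralWeight hM, Finset.sum_mul]
  refine sum_spectralWeight_mul_le_of_mem_eigenspan hM hv fun i hi => ?_
  obtain ⟨j, hj, rfl⟩ := Finset.mem_map.1 hi
  have hkj := eigsDesc_antitone hM (Finset.mem_Iic.1 hj)
  rw [eigsDesc_eq hM, eigsDesc_eq hM] at hkj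
  rw [eigsDesc_eq hM]
  exact hf (hs _) (hs _) hkj

theorem sum_spectralWeight_mul_le_of_mem_lowerEigenspan {k : Fin n} {v : Fin n → ℂ}
    (hv : v ∈ lowerEigenspan hM k) :
    ∑ i, spectralWeight hM v i * hM.eigenvalues i ≤ sqNorm v * eigsDesc M k := by
  rw [← sum_spectralWeight hM, Finset.sum_mul]
  refine sum_spectralWeight_mul_le_of_mem_eigenspan hM hv fun i hi => ?_
  obtain ⟨j, hj, rfl⟩ := Finset.mem_map.1 hi
  have hjk := eigsDesc_antitone hM (Finset.mem_Ici.1 hj)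
  rwa [eigsDesc_eq hM j] at hjk

end Spectral

theorem eigsDesc_le_of_forall_dotProduct_mulVec_le {X : Matrix (Fin n) (Fin n) ℂ}
    (hX : X.IsHermitian) (k : Fin n) {c : ℝ} (V : Submodule ℂ (Fin n → ℂ))
    (hV : n - k ≤ Module.finrank ℂ V)
    (h : ∀ v ∈ V, sqNorm v = 1 → star v ⬝ᵥ (X *ᵥ v) ≤ (c : ℂ)) :
    eigsDesc X k ≤ c := by
  obtain ⟨u, hu, huV, huW⟩ := exists_sqNorm_eq_one_mem_inf V (upperEigenspan hX k) (by
    rw [finrank_upperEigenspan]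
    omega)
  have hquad := h u huV hu
  rw [star_dotProduct_mulVec_eq_sum hX, Complex.real_le_real] at hquad
  simpa [hu] using (le_sum_spectralWeight_mul_of_mem_upperEigenspan hX monotoneOn_id
    (fun _ => Set.mem_univ _) huW).trans hquad

theorem le_eigsDesc_of_forall_le_dotProduct_mulVec {X : Matrix (Fin n) (Fin n) ℂ}
    (hX : X.IsHermitian) (k : Fin n) {c : ℝ} (V : Submodule ℂ (Fin n → ℂ))
    (hV : k + 1 ≤ Module.finrank ℂ V)
    (h : ∀ v ∈ V, sqNorm v = 1 → (c : ℂ) ≤ star v ⬝ᵥ (X *ᵥ v)) :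
    c ≤ eigsDesc X k := by
  obtain ⟨u, hu, huV, huW⟩ := exists_sqNorm_eq_one_mem_inf V (lowerEigenspan hX k) (by
    rw [finrank_lowerEigenspan]
    omega)
  have hquad := h u huV hu
  rw [star_dotProduct_mulVec_eq_sum hX, Complex.real_le_real] at hquad
  simpa [hu] using hquad.trans (sum_spectralWeight_mul_le_of_mem_lowerEigenspan hX huW)

theorem le_eigsDesc_matFun {M : Matrix (Fin n) (Fin n) ℂ} (hM : M.IsHermitian) {g : ℝ → ℝ}
    {s : Set ℝ} (hg : MonotoneOn g s) (hs : ∀ i, hM.eigenvalues i ∈ s) (k : Fin n) :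
    g (eigsDesc M k) ≤ eigsDesc (matFun g M) k :=
  le_eigsDesc_of_forall_le_dotProduct_mulVec (isHermitian_matFun hM g) k (upperEigenspan hM k)
    (finrank_upperEigenspan hM k).ge fun v hv hv1 => by
      rw [star_dotProduct_matFun_mulVec hM, Complex.real_le_real]
      simpa [hv1] using le_sum_spectralWeight_mul_of_mem_upperEigenspan hM hg hs hv

open scoped MatrixOrder in
theorem matAbs_of_posSemidef {B : Matrix (Fin n) (Fin n) ℂ} (hB : B.PosSemidef) :
    matAbs B = B := by
  have hBB : (0 : Matrix (Fin n) (Fin n) ℂ) ≤ B * B := by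
    simpa [hB.1.eq] using (posSemidef_conjTranspose_mul_self B).nonneg
  have hcfc : matAbs B = cfc Real.sqrt (Bᴴ * B) := by
    rw [(posSemidef_conjTranspose_mul_self B).1.cfc_eq, IsHermitian.cfc,
      Unitary.conjStarAlgAut_apply]
    rfl
  rw [hcfc, hB.1, ← cfcₙ_eq_cfc (hf0 := by simp), ← CFC.sqrt_eq_real_sqrt _ hBB,
    CFC.sqrt_mul_self B hB.nonneg]

theorem eigenvalues_le_opNorm {B : Matrix (Fin n) (Fin n) ℂ} (hB : B.PosSemidef) (j : Fin n) :
    hB.1.eigenvalues j ≤ opNorm B := by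
  rw [opNorm, svalsDesc, matAbs_of_posSemidef hB, ← Equiv.apply_symm_apply (eigIndexDesc hB.1) j,
    ← eigsDesc_eq hB.1]
  exact le_ciSup (Set.finite_range _).bddAbove _

theorem star_dotProduct_mulVec_le_opNorm {B : Matrix (Fin n) (Fin n) ℂ} (hB : B.PosSemidef)
    (v : Fin n → ℂ) : star v ⬝ᵥ (B *ᵥ v) ≤ ((sqNorm v * opNorm B : ℝ) : ℂ) := by
  rw [star_dotProduct_mulVec_eq_sum hB.1, Complex.real_le_real, ← sum_spectralWeight hB.1,
    Finset.sum_mul]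
  exact Finset.sum_le_sum fun i _ =>
    mul_le_mul_of_nonneg_left (eigenvalues_le_opNorm hB i) (spectralWeight_nonneg _ _ _)

theorem le_star_dotProduct_mulVec_of_posSemidef_sub_smul_one {A : Matrix (Fin n) (Fin n) ℂ}
    {c : ℝ} (hA : (A - (c : ℂ) • 1).PosSemidef) (v : Fin n → ℂ) :
    ((sqNorm v * c : ℝ) : ℂ) ≤ star v ⬝ᵥ (A *ᵥ v) := by
  have h := hA.dotProduct_mulVec_nonneg v
  rw [sub_mulVec, dotProduct_sub, smul_mulVec, one_mulVec, dotProduct_smul,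
    star_dotProduct_self_eq_sqNorm, smul_eq_mul, sub_nonneg] at h
  simpa [mul_comm] using h

theorem posSemidef_sub_of_posSemidef_sub_opNorm_smul_one {A B : Matrix (Fin n) (Fin n) ℂ}
    (hA : A.IsHermitian) (hB : B.PosSemidef) (hAB : (A - (opNorm B : ℂ) • 1).PosSemidef) :
    (A - B).PosSemidef :=
  .of_dotProduct_mulVec_nonneg (hA.sub hB.1) fun v => by
    rw [sub_mulVec, dotProduct_sub, sub_nonneg]
    exact (star_dotProduct_mulVec_le_opNorm hB v).trans
      (le_star_dotProduct_mulVec_of_posSemidef_sub_smul_one hAB v)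

theorem eigsDesc_matFun_sub_matFun_le {g : ℝ → ℝ} (hg0 : 0 ≤ g 0)
    (hgmono : MonotoneOn g (Set.Ici 0)) (hgconc : ConcaveOn ℝ (Set.Ici 0) g)
    {A B : Matrix (Fin n) (Fin n) ℂ} (hA : A.PosSemidef) (hB : B.PosSemidef)
    (hAB : (A - (opNorm B : ℂ) • 1).PosSemidef) (k : Fin n) :
    eigsDesc (matFun g A - matFun g B) k ≤ g (eigsDesc (A - B) k) := by
  have hM := posSemidef_sub_of_posSemidef_sub_opNorm_smul_one hA.1 hB hAB
  refine eigsDesc_le_of_forall_dotProduct_mulVec_le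
    ((isHermitian_matFun hA.1 g).sub (isHermitian_matFun hB.1 g)) k (lowerEigenspan hM.1 k)
    (finrank_lowerEigenspan hM.1 k).ge fun v hv hv1 => ?_
  set a := ∑ i, spectralWeight hA.1 v i * hA.1.eigenvalues i
  set b := ∑ j, spectralWeight hB.1 v j * hB.1.eigenvalues j
  set m := ∑ i, spectralWeight hM.1 v i * hM.1.eigenvalues i
  have hopNorm_le_a : opNorm B ≤ a := by
    have h := le_star_dotProduct_mulVec_of_posSemidef_sub_smul_one hAB v
    rwa [hv1, one_mul, star_dotProduct_mulVec_eq_sum hA.1, Complex.real_le_real] at h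
  have ha_sub_b : a - b = m := by
    have h := star_dotProduct_mulVec_eq_sum hM.1 v
    rw [sub_mulVec, dotProduct_sub, star_dotProduct_mulVec_eq_sum hA.1,
      star_dotProduct_mulVec_eq_sum hB.1] at h
    exact_mod_cast h
  have hm_nonneg : 0 ≤ m := by
    have h := hM.dotProduct_mulVec_nonneg v
    rwa [star_dotProduct_mulVec_eq_sum hM.1, Complex.zero_le_real] at h
  have hm_le : m ≤ eigsDesc (A - B) k := by
    simpa [hv1] using sum_spectralWeight_mul_le_of_mem_lowerEigenspan hM.1 hv
  rw [sub_mulVec, dotProduct_sub, star_dotProduct_matFun_mulVec hA.1,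
    star_dotProduct_matFun_mulVec hB.1, ← Complex.ofReal_sub, Complex.real_le_real]
  calc _ ≤ g (a - b) := hgconc.sum_mul_map_sub_sum_mul_map_le hg0
          (spectralWeight_nonneg hA.1 v) ((sum_spectralWeight hA.1 v).trans hv1)
          (spectralWeight_nonneg hB.1 v) ((sum_spectralWeight hB.1 v).trans hv1)
          hA.eigenvalues_nonneg hB.eigenvalues_nonneg
          fun j => (eigenvalues_le_opNorm hB j).trans hopNorm_le_a
    _ = g m := by rw [ha_sub_b]
    _ ≤ g (eigsDesc (A - B) k) := hgmono hm_nonneg (hm_nonneg.trans hm_le) hm_le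

/-- For a non-negative increasing concave `g` on `[0,∞)` and PSD `A, B` with
`A ≥ ‖B‖_∞ · I`, one has `λ_k^↓(g(A−B)) ≥ λ_k^↓(g(A) − g(B))` for every `k`. -/
theorem eig_concave_sub {n : ℕ} (g : ℝ → ℝ)
    (hg0 : ∀ x ∈ Set.Ici (0 : ℝ), 0 ≤ g x)
    (hgmono : MonotoneOn g (Set.Ici (0 : ℝ)))
    (hgconc : ConcaveOn ℝ (Set.Ici (0 : ℝ)) g)
    (A B : Matrix (Fin n) (Fin n) ℂ) (hA : A.PosSemidef) (hB : B.PosSemidef)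
    (hAB : (A - (opNorm B : ℂ) • 1).PosSemidef) (k : Fin n) :
    eigsDesc (matFun g A - matFun g B) k ≤ eigsDesc (matFun g (A - B)) k := by
  have hM := posSemidef_sub_of_posSemidef_sub_opNorm_smul_one hA.1 hB hAB
  calc eigsDesc (matFun g A - matFun g B) k
      ≤ g (eigsDesc (A - B) k) :=
        eigsDesc_matFun_sub_matFun_le (hg0 0 (Set.mem_Ici.2 le_rfl)) hgmono hgconc hA hB hAB k
    _ ≤ eigsDesc (matFun g (A - B)) k := le_eigsDesc_matFun hM.1 hgmono hM.eigenvalues_nonneg k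
end

section
/- For any n×n matrices A and B (or Hermitian A, B), and every k ≤ 2n, the sum of the k largest singular values of the block-diagonal matrix A ⊕ B is at most the sum of the k largest singular values of (|A|+|B|) ⊕ 0; equivalently, ‖A ⊕ B‖ ≤ ‖(|A|+|B|) ⊕ 0‖ for all unitarily invariant norms on M_{2n}. -/
open Matrix
open scoped ComplexOrder

/-- The `2n × 2n` block-diagonal matrix `A ⊕ B`, re-indexed by `Fin (n + n)`. -/
noncomputable def blockDiag2 {n : ℕ} (A B : Matrix (Fin n) (Fin n) ℂ) :
    Matrix (Fin (n + n)) (Fin (n + n)) ℂ :=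
  (Matrix.fromBlocks A 0 0 B).submatrix finSumFinEquiv.symm finSumFinEquiv.symm

/-!
Since `|A ⊕ B| = |A| ⊕ |B|`, write `|A| = Rᴴ R = R Rᴴ` and `|B| = Sᴴ S = S Sᴴ` with
`R = |A|^{1/2}`, `S = |B|^{1/2}`. For `W = [[R, S], [0, 0]]` one has `W Wᴴ = (|A| + |B|) ⊕ 0`,
while `|A| ⊕ |B|` is the pinching of `Wᴴ W`: twice it equals `Wᴴ W + D (Wᴴ W) D` with the unitary
`D = 1 ⊕ (-1)`. By Ky Fan's maximum principle, the sum of the `k` largest eigenvalues of a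
Hermitian `H` is the maximum of `Re tr (Vᴴ H V)` over isometries `V : ℂᵏ → ℂᵐ`; hence pinching
does not increase it, and `Wᴴ W`, `W Wᴴ` have the same eigenvalues.
-/

open scoped MatrixOrder

lemma matAbs_eq_cfcAbs {m : ℕ} (X : Matrix (Fin m) (Fin m) ℂ) : matAbs X = CFC.abs X := by
  have hX := posSemidef_conjTranspose_mul_self X
  rw [CFC.abs, star_eq_conjTranspose, CFC.sqrt_eq_real_sqrt _ hX.nonneg, cfcₙ_eq_cfc,
    hX.1.cfc_eq, IsHermitian.cfc, Unitary.conjStarAlgAut_apply]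
  rfl

lemma matAbs_nonneg {m : ℕ} (X : Matrix (Fin m) (Fin m) ℂ) : 0 ≤ matAbs X := by
  rw [matAbs_eq_cfcAbs]; exact CFC.abs_nonneg X

lemma matAbs_of_nonneg {m : ℕ} {P : Matrix (Fin m) (Fin m) ℂ} (hP : 0 ≤ P) : matAbs P = P := by
  rw [matAbs_eq_cfcAbs, CFC.abs_of_nonneg P]

lemma conjTranspose_sqrt_mul_sqrt {ι : Type*} [Fintype ι] [DecidableEq ι]
    {P : Matrix ι ι ℂ} (hP : 0 ≤ P) : (CFC.sqrt P)ᴴ * CFC.sqrt P = P := by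
  rw [← star_eq_conjTranspose, (CFC.sqrt_nonneg P).isSelfAdjoint.star_eq, CFC.sqrt_mul_sqrt_self P]

lemma sqrt_mul_conjTranspose_sqrt {ι : Type*} [Fintype ι] [DecidableEq ι]
    {P : Matrix ι ι ℂ} (hP : 0 ≤ P) : CFC.sqrt P * (CFC.sqrt P)ᴴ = P := by
  rw [← star_eq_conjTranspose, (CFC.sqrt_nonneg P).isSelfAdjoint.star_eq, CFC.sqrt_mul_sqrt_self P]

section BlockMatrix

variable {n : ℕ}

noncomputable def blockMat (A B C D : Matrix (Fin n) (Fin n) ℂ) :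
    Matrix (Fin (n + n)) (Fin (n + n)) ℂ :=
  (fromBlocks A B C D).submatrix finSumFinEquiv.symm finSumFinEquiv.symm

lemma blockDiag2_eq_blockMat (A B : Matrix (Fin n) (Fin n) ℂ) :
    blockDiag2 A B = blockMat A 0 0 B := rfl

lemma blockMat_mul (A B C D A' B' C' D' : Matrix (Fin n) (Fin n) ℂ) :
    blockMat A B C D * blockMat A' B' C' D' =
      blockMat (A * A' + B * C') (A * B' + B * D') (C * A' + D * C') (C * B' + D * D') := by
  rw [blockMat, blockMat, submatrix_mul_equiv, fromBlocks_multiply, blockMat]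

lemma blockMat_conjTranspose (A B C D : Matrix (Fin n) (Fin n) ℂ) :
    (blockMat A B C D)ᴴ = blockMat Aᴴ Cᴴ Bᴴ Dᴴ := by
  rw [blockMat, conjTranspose_submatrix, fromBlocks_conjTranspose, blockMat]

lemma blockMat_add (A B C D A' B' C' D' : Matrix (Fin n) (Fin n) ℂ) :
    blockMat A B C D + blockMat A' B' C' D' = blockMat (A + A') (B + B') (C + C') (D + D') := by
  rw [blockMat, blockMat, blockMat, ← fromBlocks_add]; rfl

lemma blockMat_one : blockMat (1 : Matrix (Fin n) (Fin n) ℂ) 0 0 1 = 1 := by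
  rw [blockMat, fromBlocks_one, submatrix_one_equiv]

lemma blockDiag2_mul (A B C D : Matrix (Fin n) (Fin n) ℂ) :
    blockDiag2 A B * blockDiag2 C D = blockDiag2 (A * C) (B * D) := by
  simp [blockDiag2_eq_blockMat, blockMat_mul]

lemma blockDiag2_conjTranspose (A B : Matrix (Fin n) (Fin n) ℂ) :
    (blockDiag2 A B)ᴴ = blockDiag2 Aᴴ Bᴴ := by
  simp [blockDiag2_eq_blockMat, blockMat_conjTranspose]

end BlockMatrix

lemma blockDiag2_nonneg {n : ℕ} {P Q : Matrix (Fin n) (Fin n) ℂ} (hP : 0 ≤ P) (hQ : 0 ≤ Q) :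
    0 ≤ blockDiag2 P Q := by
  rw [← conjTranspose_sqrt_mul_sqrt hP, ← conjTranspose_sqrt_mul_sqrt hQ, ← blockDiag2_mul,
    ← blockDiag2_conjTranspose]
  exact (posSemidef_conjTranspose_mul_self _).nonneg

lemma matAbs_blockDiag2 {n : ℕ} (A B : Matrix (Fin n) (Fin n) ℂ) :
    matAbs (blockDiag2 A B) = blockDiag2 (matAbs A) (matAbs B) := by
  simp only [matAbs_eq_cfcAbs]
  rw [CFC.abs, CFC.sqrt_eq_iff _ _ (star_mul_self_nonneg _)
    (blockDiag2_nonneg (CFC.abs_nonneg A) (CFC.abs_nonneg B)), blockDiag2_mul, CFC.abs_mul_abs,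
    CFC.abs_mul_abs]
  simp only [star_eq_conjTranspose, blockDiag2_conjTranspose, blockDiag2_mul]

lemma eigsDesc_antitone_s13 {m : ℕ} {H : Matrix (Fin m) (Fin m) ℂ} (hH : H.IsHermitian) :
    Antitone (eigsDesc H) := by
  rw [eigsDesc, dif_pos hH]
  exact fun a b hab ↦ Tuple.monotone_sort hH.eigenvalues (Fin.rev_le_rev.mpr hab)

lemma eigsDesc_eq_of_charpoly_eq {m : ℕ} {H₁ H₂ : Matrix (Fin m) (Fin m) ℂ}
    (h₁ : H₁.IsHermitian) (h₂ : H₂.IsHermitian) (h : H₁.charpoly = H₂.charpoly) :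
    eigsDesc H₁ = eigsDesc H₂ := by
  have := (h₁.eigenvalues_eq_eigenvalues_iff h₂).2 h
  simp only [eigsDesc, dif_pos h₁, dif_pos h₂, this]

lemma kSum_eq_sum_castLE {m k : ℕ} (μ : Fin m → ℝ) (hk : k ≤ m) :
    kSum μ k = ∑ j : Fin k, μ (Fin.castLE hk j) := by
  have hfilter : Finset.univ.filter (fun j : Fin m ↦ (j : ℕ) < k) =
      Finset.univ.map (Fin.castLEEmb hk) := by
    ext j
    simp only [Finset.mem_filter, Finset.mem_univ, true_and, Finset.mem_map, Fin.castLEEmb_apply]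
    exact ⟨fun hj ↦ ⟨⟨j, hj⟩, rfl⟩, by rintro ⟨i, rfl⟩; exact i.2⟩
  rw [kSum, hfilter, Finset.sum_map]
  rfl

lemma sum_mul_le_kSum {m k : ℕ} {e c : Fin m → ℝ} (he : Antitone e) (hc₀ : ∀ i, 0 ≤ c i)
    (hc₁ : ∀ i, c i ≤ 1) (hc : ∑ i, c i = k) :
    ∑ i, c i * e i ≤ kSum e k := by
  have hk : k ≤ m := by
    have : ∑ i, c i ≤ ∑ _i : Fin m, (1 : ℝ) := Finset.sum_le_sum fun i _ ↦ hc₁ i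
    rw [hc, Finset.sum_const, Finset.card_univ, Fintype.card_fin, nsmul_one] at this
    exact_mod_cast this
  rcases m.eq_zero_or_pos with rfl | hm
  · simp [kSum]
  let ind : Fin m → ℝ := fun i ↦ if (i : ℕ) < k then 1 else 0
  have hind : ∑ i, ind i = k := by
    simpa [kSum, ind, Finset.sum_filter] using kSum_eq_sum_castLE (fun _ ↦ (1 : ℝ)) hk
  have hkSum : kSum e k = ∑ i, ind i * e i := by
    simp only [kSum, Finset.sum_filter, ind, ite_mul, one_mul, zero_mul]
  set t := e ⟨k - 1, by omega⟩
  have hterm : ∀ i, (c i - ind i) * (e i - t) ≤ 0 := by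
    intro i
    by_cases hi : (i : ℕ) < k
    · have : t ≤ e i := he (Fin.mk_le_mk.2 (by omega))
      simp only [ind, if_pos hi]
      exact mul_nonpos_of_nonpos_of_nonneg (by linarith [hc₁ i]) (by linarith)
    · have : e i ≤ t := he (Fin.mk_le_mk.2 (by omega))
      simp only [ind, if_neg hi, sub_zero]
      exact mul_nonpos_of_nonneg_of_nonpos (hc₀ i) (by linarith)
  -- `c` and `ind` both sum to `k`, so shifting `e` by the `k`-th largest entry `t` costs nothing
  have hsum : ∑ i, (c i - ind i) * (e i - t) = ∑ i, c i * e i - kSum e k := by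
    simp only [sub_mul, mul_sub, Finset.sum_sub_distrib, ← Finset.sum_mul, hc, hind, hkSum]
    ring
  linarith [Finset.sum_nonpos fun i (_ : i ∈ Finset.univ) ↦ hterm i]

lemma conjTranspose_submatrix_mul_mul_submatrix {ι κ : Type*} [Fintype ι]
    (U H : Matrix ι ι ℂ) (e : κ → ι) :
    (U.submatrix id e)ᴴ * H * U.submatrix id e = (Uᴴ * H * U).submatrix e e := by
  rw [submatrix_mul _ _ e id e Function.bijective_id, submatrix_mul _ _ e id id
    Function.bijective_id, conjTranspose_submatrix, submatrix_id_id]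

section Isometry

variable {ι κ : Type*} [Fintype ι] [Fintype κ]

lemma re_trace_conjTranspose_mul_diagonal_mul [DecidableEq ι] (W : Matrix ι κ ℂ) (d : ι → ℝ) :
    (trace (Wᴴ * diagonal (fun i ↦ (d i : ℂ)) * W)).re = ∑ i, d i * ((W * Wᴴ) i i).re := by
  rw [trace_mul_cycle, trace, Complex.re_sum]
  refine Finset.sum_congr rfl fun i _ ↦ ?_
  simp [mul_diagonal, mul_comm]

lemma re_diag_mul_conjTranspose_nonneg (W : Matrix ι κ ℂ) (i : ι) : 0 ≤ ((W * Wᴴ) i i).re :=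
  (Complex.le_def.1 (posSemidef_self_mul_conjTranspose W).diag_nonneg).1

lemma re_diag_mul_conjTranspose_le_one [DecidableEq ι] [DecidableEq κ] {W : Matrix ι κ ℂ}
    (hW : Wᴴ * W = 1) (i : ι) : ((W * Wᴴ) i i).re ≤ 1 := by
  have hidem : W * Wᴴ * (W * Wᴴ) = W * Wᴴ := by
    rw [Matrix.mul_assoc, ← Matrix.mul_assoc Wᴴ, hW, Matrix.one_mul]
  have hproj : (1 - W * Wᴴ)ᴴ * (1 - W * Wᴴ) = 1 - W * Wᴴ := by
    rw [conjTranspose_sub, conjTranspose_one, conjTranspose_mul, conjTranspose_conjTranspose,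
      sub_mul, mul_sub, mul_sub, hidem]
    simp
  have := (hproj ▸ posSemidef_conjTranspose_mul_self (1 - W * Wᴴ)).diag_nonneg (i := i)
  simpa using (Complex.le_def.1 this).1

lemma sum_re_diag_mul_conjTranspose [DecidableEq κ] {W : Matrix ι κ ℂ} (hW : Wᴴ * W = 1) :
    ∑ i, ((W * Wᴴ) i i).re = Fintype.card κ :=
  calc ∑ i, ((W * Wᴴ) i i).re = (trace (W * Wᴴ)).re := (Complex.re_sum _ _).symm
    _ = Fintype.card κ := by rw [trace_mul_comm, hW, trace_one]; simp

end Isometry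

lemma exists_unitary_conj_eq_diagonal_eigsDesc {m : ℕ} {H : Matrix (Fin m) (Fin m) ℂ}
    (hH : H.IsHermitian) :
    ∃ U : Matrix (Fin m) (Fin m) ℂ, Uᴴ * U = 1 ∧ U * Uᴴ = 1 ∧
      Uᴴ * H * U = diagonal (fun i ↦ (eigsDesc H i : ℂ)) := by
  set U₀ := (hH.eigenvectorUnitary : Matrix (Fin m) (Fin m) ℂ)
  have hU₀ : U₀ᴴ * U₀ = 1 := Unitary.coe_star_mul_self _
  have hU₀' : U₀ * U₀ᴴ = 1 := Unitary.coe_mul_star_self _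
  have hdiag : U₀ᴴ * H * U₀ = diagonal (RCLike.ofReal ∘ hH.eigenvalues) :=
    (Unitary.conjStarAlgAut_star_apply (S := ℂ) _ _).symm.trans
      hH.conjStarAlgAut_star_eigenvectorUnitary
  let σ : Equiv.Perm (Fin m) := Fin.revPerm.trans (Tuple.sort hH.eigenvalues)
  refine ⟨U₀.submatrix id σ, ?_, ?_, ?_⟩
  · simpa [hU₀] using conjTranspose_submatrix_mul_mul_submatrix U₀ 1 σ
  · rw [conjTranspose_submatrix, submatrix_mul_equiv, submatrix_id_id, hU₀']
  · rw [conjTranspose_submatrix_mul_mul_submatrix, hdiag, submatrix_diagonal_equiv, eigsDesc,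
      dif_pos hH]
    rfl

lemma re_trace_le_kSum {m k : ℕ} {H : Matrix (Fin m) (Fin m) ℂ} (hH : H.IsHermitian)
    {V : Matrix (Fin m) (Fin k) ℂ} (hV : Vᴴ * V = 1) :
    (trace (Vᴴ * H * V)).re ≤ kSum (eigsDesc H) k := by
  obtain ⟨U, -, hU, hUH⟩ := exists_unitary_conj_eq_diagonal_eigsDesc hH
  set W := Uᴴ * V
  have hW : Wᴴ * W = 1 := by
    rw [conjTranspose_mul, conjTranspose_conjTranspose, Matrix.mul_assoc, ← Matrix.mul_assoc U,
      hU, Matrix.one_mul, hV]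
  have hconj : Vᴴ * H * V = Wᴴ * (Uᴴ * H * U) * W := by
    simp only [W, conjTranspose_mul, conjTranspose_conjTranspose, Matrix.mul_assoc]
    simp only [← Matrix.mul_assoc U, hU, Matrix.one_mul]
  rw [hconj, hUH, re_trace_conjTranspose_mul_diagonal_mul]
  simp_rw [mul_comm (eigsDesc H _)]
  exact sum_mul_le_kSum (eigsDesc_antitone_s13 hH) (re_diag_mul_conjTranspose_nonneg W)
    (re_diag_mul_conjTranspose_le_one hW)
    (by rw [sum_re_diag_mul_conjTranspose hW, Fintype.card_fin])

lemma exists_isometry_re_trace_eq_kSum {m k : ℕ} {H : Matrix (Fin m) (Fin m) ℂ}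
    (hH : H.IsHermitian) (hk : k ≤ m) :
    ∃ V : Matrix (Fin m) (Fin k) ℂ,
      Vᴴ * V = 1 ∧ (trace (Vᴴ * H * V)).re = kSum (eigsDesc H) k := by
  obtain ⟨U, hU, -, hUH⟩ := exists_unitary_conj_eq_diagonal_eigsDesc hH
  refine ⟨U.submatrix id (Fin.castLE hk), ?_, ?_⟩
  · simpa [hU, submatrix_one _ (Fin.castLE_injective hk)] using
      conjTranspose_submatrix_mul_mul_submatrix U 1 (Fin.castLE hk)
  · rw [conjTranspose_submatrix_mul_mul_submatrix, hUH,
      submatrix_diagonal _ _ (Fin.castLE_injective hk), trace_diagonal, Complex.re_sum,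
      kSum_eq_sum_castLE _ hk]
    simp

lemma kSum_eigsDesc_le_of_add_self_eq {m k : ℕ} {H M D : Matrix (Fin m) (Fin m) ℂ}
    (hH : H.IsHermitian) (hM : M.IsHermitian) (hD : Dᴴ * D = 1) (h : H + H = M + Dᴴ * M * D)
    (hk : k ≤ m) : kSum (eigsDesc H) k ≤ kSum (eigsDesc M) k := by
  obtain ⟨V, hV, hVH⟩ := exists_isometry_re_trace_eq_kSum hH hk
  have hDV : (D * V)ᴴ * (D * V) = 1 := by
    rw [conjTranspose_mul, Matrix.mul_assoc, ← Matrix.mul_assoc Dᴴ, hD, Matrix.one_mul, hV]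
  have htrace := congrArg (fun X ↦ (trace (Vᴴ * X * V)).re) h
  simp only [Matrix.mul_add, Matrix.add_mul, trace_add, Complex.add_re] at htrace
  have hconj : Vᴴ * (Dᴴ * M * D) * V = (D * V)ᴴ * M * (D * V) := by
    simp only [conjTranspose_mul, Matrix.mul_assoc]
  rw [hconj] at htrace
  linarith [re_trace_le_kSum hM hV, re_trace_le_kSum hM hDV]

lemma kSum_eigsDesc_blockDiag2_le {n k : ℕ} (R S : Matrix (Fin n) (Fin n) ℂ) (hk : k ≤ n + n) :
    kSum (eigsDesc (blockDiag2 (Rᴴ * R) (Sᴴ * S))) k ≤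
      kSum (eigsDesc (blockDiag2 (R * Rᴴ + S * Sᴴ) 0)) k := by
  set W := blockMat R S 0 0
  set D := blockMat (1 : Matrix (Fin n) (Fin n) ℂ) 0 0 (-1)
  have hD : Dᴴ * D = 1 := by
    rw [blockMat_conjTranspose, blockMat_mul, ← blockMat_one]
    simp
  have hpinch : blockDiag2 (Rᴴ * R) (Sᴴ * S) + blockDiag2 (Rᴴ * R) (Sᴴ * S) =
      Wᴴ * W + Dᴴ * (Wᴴ * W) * D := by
    simp only [W, D, blockDiag2_eq_blockMat, blockMat_conjTranspose, blockMat_mul, blockMat_add]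
    congr 1 <;> simp
  have hWW : W * Wᴴ = blockDiag2 (R * Rᴴ + S * Sᴴ) 0 := by
    simp [W, blockDiag2_eq_blockMat, blockMat_conjTranspose, blockMat_mul]
  have hH : (blockDiag2 (Rᴴ * R) (Sᴴ * S)).IsHermitian := by
    rw [← blockDiag2_mul, ← blockDiag2_conjTranspose]
    exact isHermitian_conjTranspose_mul_self _
  have hM := isHermitian_conjTranspose_mul_self W
  calc _ ≤ kSum (eigsDesc (Wᴴ * W)) k := kSum_eigsDesc_le_of_add_self_eq hH hM hD hpinch hk
    _ = _ := by
      rw [eigsDesc_eq_of_charpoly_eq hM (isHermitian_mul_conjTranspose_self W)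
        (charpoly_mul_comm _ _), hWW]

/-- For any `A, B` and every `k`, the sum of the `k` largest singular values of
`A ⊕ B` is at most that of `(|A|+|B|) ⊕ 0`. -/
theorem kyfan_blockDiag {n : ℕ} (A B : Matrix (Fin n) (Fin n) ℂ) (k : ℕ) (hk : k ≤ n + n) :
    kSum (svalsDesc (blockDiag2 A B)) k ≤
      kSum (svalsDesc (blockDiag2 (matAbs A + matAbs B) 0)) k := by
  have hA := matAbs_nonneg A
  have hB := matAbs_nonneg B
  rw [svalsDesc, svalsDesc, matAbs_blockDiag2,
    matAbs_of_nonneg (blockDiag2_nonneg (add_nonneg hA hB) le_rfl)]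
  have := kSum_eigsDesc_blockDiag2_le (CFC.sqrt (matAbs A)) (CFC.sqrt (matAbs B)) hk
  rwa [conjTranspose_sqrt_mul_sqrt hA, conjTranspose_sqrt_mul_sqrt hB,
    sqrt_mul_conjTranspose_sqrt hA, sqrt_mul_conjTranspose_sqrt hB] at this
end
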